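/- For every R > 0, the exit-time density of the 1-ball integrates to one: ∫_0^∞ f₁^exit(t) dt = 1, i.e., f₁^exit is a probability density function on (0, ∞). -/

import Mathlib

/-!
The series for `f₁exit` cannot be integrated term by term: its `k`-th term integrates to
`1 / ((2k+1) c)` with `c = π² / (8R²)`, which is not summable. Grouping the terms in pairs
`k = 2j, 2j+1` repairs this. Writing `a = 4j+1`, `b = 4j+3`, the pair
`a e^{-a²ct} - b e^{-b²ct}` has `L¹` norm at most `(3/c)(1/a - 1/b)`, which is summable, so the
pairs may be integrated term by term. Their integrals `(1/c)(1/a - 1/b)` add up, by Leibniz's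
series, to `π / (4c)`, and `π / (2R²) · π / (4c) = 1`.
-/

open Real Filter Topology MeasureTheory

/-- Exit-time density of a standard Brownian motion started at the center of
`(-R, R)` and killed at `±R`. -/
noncomputable def f₁exit (R t : ℝ) : ℝ :=
  (π / (2 * R ^ 2)) * ∑' k : ℕ, (-1 : ℝ) ^ k * (2 * (k : ℝ) + 1) *
    Real.exp (-((2 * (k : ℝ) + 1) ^ 2 * π ^ 2 * t) / (8 * R ^ 2))

open Set

theorem Finset.sum_range_two_mul_eq_sum_pairs {M : Type*} [AddCommMonoid M] (f : ℕ → M)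
    (n : ℕ) : ∑ i ∈ range (2 * n), f i = ∑ j ∈ range n, (f (2 * j) + f (2 * j + 1)) := by
  induction n with
  | zero => simp
  | succ n ih =>
    rw [sum_range_succ, ← ih, show 2 * (n + 1) = 2 * n + 1 + 1 by ring, sum_range_succ,
      sum_range_succ, add_assoc]

theorem Summable.hasSum_pairs {E : Type*} [NormedAddCommGroup E] [CompleteSpace E] {f : ℕ → E}
    (hf : Summable f) : HasSum (fun j ↦ f (2 * j) + f (2 * j + 1)) (∑' n, f n) := by
  have he : Summable fun j ↦ f (2 * j) := hf.comp_injective (mul_right_injective₀ two_ne_zero)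
  have ho : Summable fun j ↦ f (2 * j + 1) :=
    hf.comp_injective ((add_left_injective 1).comp (mul_right_injective₀ two_ne_zero))
  rw [← tsum_even_add_odd he ho]
  exact he.hasSum.add ho.hasSum

theorem hasSum_leibniz_pairs :
    HasSum (fun j : ℕ ↦ (1 : ℝ) / (4 * j + 1) - 1 / (4 * j + 3)) (π / 4) := by
  have h_pair (j : ℕ) : (1 : ℝ) / (4 * j + 1) - 1 / (4 * j + 3) =
      (-1) ^ (2 * j) / (2 * ↑(2 * j) + 1) + (-1) ^ (2 * j + 1) / (2 * ↑(2 * j + 1) + 1) := by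
    simp only [pow_succ, pow_mul]
    push_cast
    ring
  rw [hasSum_iff_tendsto_nat_of_nonneg (fun j ↦ sub_nonneg.2 (by gcongr; norm_num))]
  simp_rw [h_pair]
  simpa only [Function.comp_def, id, Finset.sum_range_two_mul_eq_sum_pairs]
    using tendsto_sum_pi_div_four.comp (tendsto_id.const_mul_atTop' two_pos)

noncomputable def heatMode (c x t : ℝ) : ℝ := x * exp (-(x ^ 2 * c) * t)

section heatMode

variable {c : ℝ}

theorem integrableOn_heatMode (hc : 0 < c) (x : ℝ) : IntegrableOn (heatMode c x) (Ioi 0) := by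
  rcases eq_or_ne x 0 with rfl | hx
  · rw [show heatMode c 0 = 0 from funext fun _ ↦ zero_mul _]
    exact integrableOn_zero
  · exact (integrableOn_exp_mul_Ioi (neg_lt_zero.2 (by positivity)) 0).const_mul x

theorem integral_heatMode (hc : 0 < c) (x : ℝ) :
    ∫ t in Ioi 0, heatMode c x t = 1 / (x * c) := by
  rcases eq_or_ne x 0 with rfl | hx
  · simp [heatMode]
  · have hrate : -(x ^ 2 * c) < 0 := neg_lt_zero.2 (by positivity)
    unfold heatMode
    rw [integral_const_mul, integral_exp_mul_Ioi hrate]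
    field_simp
    simp

theorem summable_heatMode_nat (hc : 0 < c) {t : ℝ} (ht : 0 < t) :
    Summable fun n : ℕ ↦ heatMode c n t := by
  refine (summable_pow_mul_exp_neg_nat_mul 1 (mul_pos hc ht)).of_nonneg_of_le
    (fun n ↦ by unfold heatMode; positivity) fun n ↦ ?_
  have hn : (n : ℝ) ≤ (n : ℝ) ^ 2 := by
    rcases n.eq_zero_or_pos with rfl | hn
    · simp
    · nlinarith [(Nat.one_le_cast (α := ℝ)).2 hn]
  rw [heatMode, pow_one]
  refine mul_le_mul_of_nonneg_left (exp_le_exp.2 ?_) n.cast_nonneg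
  nlinarith [mul_pos hc ht]

/-- `a e^{-a²ct} - b e^{-b²ct} = a (e^{-a²ct} - e^{-b²ct}) - (b - a) e^{-b²ct}`, and both terms
on the right are nonnegative. -/
theorem abs_heatMode_sub_le (hc : 0 ≤ c) {a b t : ℝ} (ha : 0 ≤ a) (hab : a ≤ b)
    (ht : 0 ≤ t) :
    |heatMode c a t - heatMode c b t| ≤
      heatMode c a t + (b - 2 * a) * exp (-(b ^ 2 * c) * t) := by
  have hexp : exp (-(b ^ 2 * c) * t) ≤ exp (-(a ^ 2 * c) * t) := by gcongr
  have hpos := exp_pos (-(b ^ 2 * c) * t)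
  rw [heatMode, heatMode, abs_le]
  constructor <;> nlinarith

theorem integral_norm_heatMode_sub_le (hc : 0 < c) {a b : ℝ} (ha : 0 < a) (hab : a ≤ b) :
    ∫ t in Ioi 0, ‖heatMode c a t - heatMode c b t‖ ≤ 3 / c * (1 / a - 1 / b) := by
  have hb : 0 < b := ha.trans_le hab
  have hrate : -(b ^ 2 * c) < 0 := neg_lt_zero.2 (by positivity)
  have hexp_int := (integrableOn_exp_mul_Ioi hrate 0).const_mul (b - 2 * a)
  calc ∫ t in Ioi 0, ‖heatMode c a t - heatMode c b t‖
      ≤ ∫ t in Ioi 0, (heatMode c a t + (b - 2 * a) * exp (-(b ^ 2 * c) * t)) :=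
        setIntegral_mono_on
          ((integrableOn_heatMode hc a).sub (integrableOn_heatMode hc b)).norm
          ((integrableOn_heatMode hc a).add hexp_int) measurableSet_Ioi
          fun t ht ↦ abs_heatMode_sub_le hc.le ha.le hab (mem_Ioi.1 ht).le
    _ = 1 / (a * c) + (b - 2 * a) / (b ^ 2 * c) := by
        rw [integral_add (integrableOn_heatMode hc a) hexp_int, integral_heatMode hc,
          integral_const_mul, integral_exp_mul_Ioi hrate]
        field_simp
        simp
    _ ≤ 3 / c * (1 / a - 1 / b) := by
        rw [div_add_div _ _ (by positivity) (by positivity), div_le_iff₀ (by positivity)]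
        field_simp
        nlinarith [sq_nonneg (b - a)]

end heatMode

theorem f₁exit_eq_tsum_heatMode_sub {R t : ℝ} (hR : R ≠ 0) (ht : 0 < t) :
    f₁exit R t = π / (2 * R ^ 2) * ∑' j : ℕ, (heatMode (π ^ 2 / (8 * R ^ 2)) (4 * j + 1) t -
      heatMode (π ^ 2 / (8 * R ^ 2)) (4 * j + 3) t) := by
  set c := π ^ 2 / (8 * R ^ 2)
  have hc : 0 < c := by positivity
  have hterm (k : ℕ) : (-1 : ℝ) ^ k * (2 * (k : ℝ) + 1) *
      exp (-((2 * (k : ℝ) + 1) ^ 2 * π ^ 2 * t) / (8 * R ^ 2)) =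
      (-1) ^ k * heatMode c ↑(2 * k + 1) t := by
    simp only [heatMode, c]
    push_cast
    ring_nf
  have hsum : Summable fun k : ℕ ↦ heatMode c ↑(2 * k + 1) t :=
    (summable_heatMode_nat hc ht).comp_injective
      ((add_left_injective 1).comp (mul_right_injective₀ two_ne_zero))
  rw [f₁exit, tsum_congr hterm, ← hsum.alternating.hasSum_pairs.tsum_eq]
  congr 1
  refine tsum_congr fun j ↦ ?_
  simp only [pow_succ, pow_mul]
  push_cast
  ring_nf

/-- The exit-time density of the 1-ball integrates to one:
`∫_0^∞ f₁^exit(t) dt = 1`. -/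
theorem f₁exit_integral_eq_one (R : ℝ) (hR : 0 < R) :
    ∫ t in Set.Ioi (0 : ℝ), f₁exit R t = 1 := by
  set c := π ^ 2 / (8 * R ^ 2)
  have hc : 0 < c := by positivity
  set g : ℕ → ℝ → ℝ := fun j t ↦ heatMode c (4 * j + 1) t - heatMode c (4 * j + 3) t
  have hg_int (j : ℕ) : IntegrableOn (g j) (Ioi 0) :=
    (integrableOn_heatMode hc _).sub (integrableOn_heatMode hc _)
  have hg_integral (j : ℕ) :
      ∫ t in Ioi 0, g j t = 1 / c * (1 / (4 * j + 1) - 1 / (4 * j + 3)) := by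
    rw [integral_sub (integrableOn_heatMode hc _) (integrableOn_heatMode hc _),
      integral_heatMode hc, integral_heatMode hc]
    field_simp
  have hg_summable : Summable fun j ↦ ∫ t in Ioi 0, ‖g j t‖ :=
    (hasSum_leibniz_pairs.summable.mul_left (3 / c)).of_nonneg_of_le
      (fun j ↦ integral_nonneg fun t ↦ norm_nonneg _)
      fun j ↦ integral_norm_heatMode_sub_le hc (by positivity) (by linarith)
  calc ∫ t in Ioi 0, f₁exit R t = ∫ t in Ioi 0, π / (2 * R ^ 2) * ∑' j, g j t :=
        setIntegral_congr_fun measurableSet_Ioi fun _ ht ↦ f₁exit_eq_tsum_heatMode_sub hR.ne' ht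
    _ = π / (2 * R ^ 2) * (1 / c * (π / 4)) := by
        rw [integral_const_mul, ← integral_tsum_of_summable_integral_norm hg_int hg_summable]
        simp_rw [hg_integral, tsum_mul_left, hasSum_leibniz_pairs.tsum_eq]
    _ = 1 := by
        simp only [c]
        field_simp
        ring
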